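/- Let n be a positive integer, let (X_1, …, X_n) be a random vector in ℝ^n with an arbitrary joint distribution, and let Y_1, …, Y_n be independent real random variables. Fix t ∈ ℝ and suppose that P[Y_i ≥ t] = P[X_i ≥ t] for every i ∈ [n]. Then P[max_{i∈[n]} Y_i ≥ t] ≥ (1 − 1/e) · P[max_{i∈[n]} X_i ≥ t]. -/

import Mathlib

/-!
Write `p i = P[t ≤ X i] = P'[t ≤ Y i]`. The union bound gives `P[max X ≥ t] ≤ min(1, ∑ p i)`,
while independence of the `Y i` gives `P[max Y ≥ t] = 1 - ∏ (1 - p i) ≥ 1 - exp (-∑ p i)`.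
Finally `s ↦ 1 - exp (-s)` is concave, so it lies above its chord `(1 - 1/e) s` on `[0, 1]`, and it
is increasing, so `1 - exp (-s) ≥ (1 - 1/e) min(1, s)` for all `s ≥ 0`.
-/

open MeasureTheory ProbabilityTheory Finset

lemma prod_one_sub_le_exp_neg_sum {ι : Type*} (s : Finset ι) {p : ι → ℝ}
    (hp : ∀ i ∈ s, p i ≤ 1) : ∏ i ∈ s, (1 - p i) ≤ Real.exp (-∑ i ∈ s, p i) :=
  calc ∏ i ∈ s, (1 - p i) ≤ ∏ i ∈ s, Real.exp (-p i) :=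
        prod_le_prod (fun i hi => sub_nonneg.2 (hp i hi)) fun i _ => Real.one_sub_le_exp_neg _
    _ = Real.exp (-∑ i ∈ s, p i) := by rw [← sum_neg_distrib, Real.exp_sum]

lemma one_sub_exp_neg_one_mul_le_one_sub_exp_neg {m s : ℝ} (hm0 : 0 ≤ m) (hm1 : m ≤ 1)
    (hms : m ≤ s) : (1 - (Real.exp 1)⁻¹) * m ≤ 1 - Real.exp (-s) := by
  have hchord : Real.exp (-m) ≤ (1 - m) * 1 + m * (Real.exp 1)⁻¹ := by
    have := convexOn_exp.2 (Set.mem_univ 0) (Set.mem_univ (-1)) (sub_nonneg.2 hm1) hm0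
      (sub_add_cancel 1 m)
    simpa [Real.exp_neg] using this
  have hmono : Real.exp (-s) ≤ Real.exp (-m) := Real.exp_le_exp.2 (neg_le_neg hms)
  linarith

lemma one_sub_exp_neg_one_mul_le_one_sub_prod_one_sub {ι : Type*} (s : Finset ι) {p : ι → ℝ}
    (hp : ∀ i ∈ s, p i ≤ 1) {m : ℝ} (hm0 : 0 ≤ m) (hm1 : m ≤ 1) (hm : m ≤ ∑ i ∈ s, p i) :
    (1 - (Real.exp 1)⁻¹) * m ≤ 1 - ∏ i ∈ s, (1 - p i) :=
  (one_sub_exp_neg_one_mul_le_one_sub_exp_neg hm0 hm1 hm).trans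
    (sub_le_sub_left (prod_one_sub_le_exp_neg_sum s hp) 1)

lemma setOf_le_ciSup_eq_iUnion {α ι β : Type*} [ConditionallyCompleteLinearOrder β] [Finite ι]
    [Nonempty ι] (f : ι → α → β) (t : β) :
    {a | t ≤ ⨆ i, f i a} = ⋃ i, {a | t ≤ f i a} := by
  ext a
  simp only [Set.mem_ofPred_eq, Set.mem_iUnion]
  obtain ⟨j, hj⟩ := exists_eq_ciSup_of_finite (f := fun i => f i a)
  exact ⟨fun h => ⟨j, hj ▸ h⟩, fun ⟨i, hi⟩ => hi.trans (le_ciSup (f := fun i => f i a) (Finite.bddAbove_range _) i)⟩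

lemma ProbabilityTheory.iIndepFun.measureReal_iUnion_preimage {Ω ι β : Type*}
    [MeasurableSpace Ω] {μ : Measure Ω} [IsProbabilityMeasure μ] [Fintype ι] [MeasurableSpace β]
    {f : ι → Ω → β} (hf : iIndepFun f μ) (hmf : ∀ i, Measurable (f i)) {S : ι → Set β}
    (hS : ∀ i, MeasurableSet (S i)) :
    μ.real (⋃ i, f i ⁻¹' S i) = 1 - ∏ i, (1 - μ.real (f i ⁻¹' S i)) := by
  have hmeas : ∀ i, MeasurableSet (f i ⁻¹' S i) := fun i => hmf i (hS i)
  have hinter : μ.real (⋂ i, (f i ⁻¹' S i)ᶜ) = ∏ i, μ.real (f i ⁻¹' S i)ᶜ := by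
    rw [measureReal_def, hf.meas_iInter (s := fun i => (f i ⁻¹' S i)ᶜ)
      fun i => ⟨(S i)ᶜ, (hS i).compl, rfl⟩,
      ENNReal.toReal_prod]
    rfl
  rw [← compl_compl (⋃ i, f i ⁻¹' S i), Set.compl_iUnion,
    probReal_compl_eq_one_sub (MeasurableSet.iInter fun i => (hmeas i).compl), hinter]
  simp only [probReal_compl_eq_one_sub (hmeas _)]

theorem independent_max_tail_lower_bound
    (n : ℕ) (hn : 0 < n)
    (Ω : Type) [MeasurableSpace Ω] (P : Measure Ω) [IsProbabilityMeasure P]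
    (Ω' : Type) [MeasurableSpace Ω'] (P' : Measure Ω') [IsProbabilityMeasure P']
    (X : Fin n → Ω → ℝ)
    (Y : Fin n → Ω' → ℝ) (hmY : ∀ i, Measurable (Y i))
    (hindep : iIndepFun Y P')
    (t : ℝ)
    (htail : ∀ i, P' {ω | t ≤ Y i ω} = P {ω | t ≤ X i ω}) :
    (1 - (Real.exp 1)⁻¹) * (P {ω | t ≤ ⨆ i, X i ω}).toReal ≤
      (P' {ω | t ≤ ⨆ i, Y i ω}).toReal := by
  have : Nonempty (Fin n) := Fin.pos_iff_nonempty.mp hn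
  simp only [← measureReal_def, setOf_le_ciSup_eq_iUnion]
  have hunion : P.real (⋃ i, {ω | t ≤ X i ω}) ≤ ∑ i, P'.real {ω | t ≤ Y i ω} := by
    simpa only [measureReal_def, htail] using measureReal_iUnion_fintype_le _
  have hmax : P'.real (⋃ i, {ω | t ≤ Y i ω}) = 1 - ∏ i, (1 - P'.real {ω | t ≤ Y i ω}) :=
    hindep.measureReal_iUnion_preimage hmY fun _ => measurableSet_Ici
  rw [hmax]
  exact one_sub_exp_neg_one_mul_le_one_sub_prod_one_sub _ (fun _ _ => measureReal_le_one)
    measureReal_nonneg measureReal_le_one hunion
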